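/- arXiv:1610.03300 — 4 statements merged into one kernel-verified Lean document; each statement's English description precedes it below -/
import Mathlib

section
/- For every x ∈ ℝ^{n+1} and t ≥ 0, the first coordinate of the flow satisfies |φ^{(0)}_t(x)| ≤ e ‖x‖_∞ e^{-αt} (1 ∨ t^n), and consequently sup_{t ≥ 0} |φ^{(0)}_t(x)| ≤ e ‖x‖_∞ (1 ∨ (n/(αe))^n). -/
/-- First coordinate of the flow of the Markovian cascade:
`φ^{(0)}_t(x) = e^{-αt} Σ_{m=0}^{n} (t^m/m!) x^{(m)}`. -/
noncomputable def cascadeFlowZero (α : ℝ) (n : ℕ) (x : ℕ → ℝ) (t : ℝ) : ℝ :=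
  Real.exp (-α * t) * ∑ m ∈ Finset.range (n + 1), t ^ m / (Nat.factorial m) * x m

/-!
Bounding `t ^ m` by `1 ∨ t ^ n` and `|x m|` by `‖x‖_∞` in each term leaves `∑ 1 / m! ≤ e`, which
gives the first bound. For the second, `1 + u ≤ eᵘ` at `u = s / n - 1` shows that `s ^ n * e^{-s}`
is at most its value `(n / e) ^ n` at `s = n`; then substitute `s = α t`.
-/

open Real Finset Nat

lemma pow_mul_exp_neg_le (n : ℕ) {s : ℝ} (hs : 0 ≤ s) :
    s ^ n * exp (-s) ≤ (n / exp 1) ^ n := by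
  rcases n.eq_zero_or_pos with rfl | hn
  · simpa using hs
  have h : s / n ≤ exp (s / n - 1) := by linarith [add_one_le_exp (s / n - 1)]
  calc s ^ n * exp (-s) = n ^ n * (s / n) ^ n * exp (-s) := by
        rw [div_pow, mul_div_cancel₀ _ (by positivity)]
    _ ≤ n ^ n * exp (s / n - 1) ^ n * exp (-s) := by gcongr
    _ = n ^ n * exp (-n) := by
      rw [← exp_nat_mul, mul_assoc, ← exp_add]
      congr 2
      field_simp
      ring
    _ = (n / exp 1) ^ n := by rw [div_pow, ← exp_nat_mul, mul_one, exp_neg, div_eq_mul_inv]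

lemma exp_neg_mul_mul_pow_le {α : ℝ} (hα : 0 < α) (n : ℕ) {t : ℝ} (ht : 0 ≤ t) :
    exp (-α * t) * t ^ n ≤ (n / (α * exp 1)) ^ n := by
  have h := pow_mul_exp_neg_le n (mul_nonneg hα.le ht)
  rw [mul_comm α, div_mul_eq_div_div, div_pow, le_div_iff₀ (by positivity)]
  calc exp (-α * t) * t ^ n * α ^ n = (α * t) ^ n * exp (-(α * t)) := by ring_nf
    _ ≤ _ := h

lemma exp_neg_mul_mul_max_one_pow_le {α : ℝ} (hα : 0 < α) (n : ℕ) {t : ℝ} (ht : 0 ≤ t) :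
    exp (-α * t) * max 1 (t ^ n) ≤ max 1 ((n / (α * exp 1)) ^ n) := by
  rw [mul_max_of_nonneg _ _ (exp_pos _).le, mul_one]
  gcongr
  · exact exp_le_one_iff.2 (by nlinarith)
  · exact exp_neg_mul_mul_pow_le hα n ht

lemma pow_le_max_one_pow {t : ℝ} (ht : 0 ≤ t) {m n : ℕ} (hmn : m ≤ n) :
    t ^ m ≤ max 1 (t ^ n) := by
  rcases le_total t 1 with h | h
  · exact le_max_of_le_left (pow_le_one₀ ht h)
  · exact le_max_of_le_right (pow_le_pow_right₀ h hmn)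

lemma abs_sum_pow_div_factorial_mul_le {t M : ℝ} (ht : 0 ≤ t) {n : ℕ} {x : ℕ → ℝ}
    (hx : ∀ m ∈ range (n + 1), |x m| ≤ M) :
    |∑ m ∈ range (n + 1), t ^ m / m ! * x m| ≤ exp 1 * M * max 1 (t ^ n) := by
  have hM : 0 ≤ M := (abs_nonneg _).trans (hx 0 (by simp))
  calc |∑ m ∈ range (n + 1), t ^ m / m ! * x m|
      ≤ ∑ m ∈ range (n + 1), |t ^ m / m ! * x m| := abs_sum_le_sum_abs _ _
    _ ≤ ∑ m ∈ range (n + 1), (1 : ℝ) ^ m / m ! * (M * max 1 (t ^ n)) := by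
      refine sum_le_sum fun m hm => ?_
      rw [abs_mul, abs_of_nonneg (by positivity), one_pow, div_mul_eq_mul_div,
        div_mul_eq_mul_div, one_mul, mul_comm M]
      gcongr
      · exact pow_le_max_one_pow ht (mem_range_succ_iff.mp hm)
      · exact hx m hm
    _ = (∑ m ∈ range (n + 1), (1 : ℝ) ^ m / m !) * (M * max 1 (t ^ n)) := (sum_mul _ _ _).symm
    _ ≤ exp 1 * M * max 1 (t ^ n) := by
      rw [mul_assoc]
      gcongr
      exact sum_le_exp_of_nonneg zero_le_one _

/-- For every `x` and `t ≥ 0`, `|φ^{(0)}_t(x)| ≤ e ‖x‖_∞ e^{-αt} (1 ∨ t^n)`, and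
consequently `|φ^{(0)}_t(x)| ≤ e ‖x‖_∞ (1 ∨ (n/(αe))^n)` for all `t ≥ 0`. -/
theorem cascadeFlowZero_bound (α : ℝ) (hα : 0 < α) (n : ℕ) (x : ℕ → ℝ) :
    ∀ t ≥ (0 : ℝ),
      |cascadeFlowZero α n x t| ≤
        Real.exp 1 * ((Finset.range (n + 1)).sup' (by simp) fun m => |x m|) *
          (Real.exp (-α * t) * max 1 (t ^ n)) ∧
      |cascadeFlowZero α n x t| ≤
        Real.exp 1 * ((Finset.range (n + 1)).sup' (by simp) fun m => |x m|) *
          max 1 ((n / (α * Real.exp 1)) ^ n) := by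
  intro t ht
  set M := (range (n + 1)).sup' (by simp) fun m => |x m|
  have hx : ∀ m ∈ range (n + 1), |x m| ≤ M := fun m hm => le_sup' (fun m => |x m|) hm
  have hM : 0 ≤ M := (abs_nonneg _).trans (hx 0 (by simp))
  have h_first : |cascadeFlowZero α n x t| ≤ exp 1 * M * (exp (-α * t) * max 1 (t ^ n)) := by
    rw [cascadeFlowZero, abs_mul, abs_of_pos (exp_pos _), mul_left_comm]
    gcongr
    exact abs_sum_pow_div_factorial_mul_le ht hx
  refine ⟨h_first, h_first.trans ?_⟩
  gcongr
  exact exp_neg_mul_mul_max_one_pow_le hα n ht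
end

section
/- If c_1, ..., c_{n+1} are all nonzero and 0 < s_{n+1} < s_n < ... < s_1 < T, then the Jacobian matrix of s ↦ γ(x, c, s) = φ_T(x) + Σ_k c_k e^{-α s_k} v(s_k) is invertible, with determinant equal to (-1)^{n+1} α (∏_k c_k e^{-α s_k}) times the determinant of the matrix with columns C̃^{(k)} = (α s_k^n/n! − s_k^{n-1}/(n-1)!, ..., α s_k − 1, 1)^T, which is a nonzero multiple of a Vandermonde determinant in s_1, ..., s_{n+1}. -/
/-- The Jacobian matrix of `s ↦ γ(x,c,s) = φ_T(x) + Σ_k c_k e^{-α s_k} v(s_k)`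
(rows indexed by coordinates `j`, columns by jump indices `k`):
entry `(j,k)` is `c_k e^{-α s_k} ((d/ds)[s^{n-j}/(n-j)!]|_{s_k} - α s_k^{n-j}/(n-j)!)`. -/
noncomputable def jacMat (α : ℝ) (n : ℕ) (c s : Fin (n + 1) → ℝ) :
    Matrix (Fin (n + 1)) (Fin (n + 1)) ℝ :=
  Matrix.of fun j k =>
    c k * Real.exp (-α * s k) *
      ((if (j : ℕ) < n then s k ^ (n - 1 - (j : ℕ)) / (Nat.factorial (n - 1 - (j : ℕ)))
        else 0)
        - α * (s k ^ (n - (j : ℕ)) / (Nat.factorial (n - (j : ℕ)))))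

/-- The matrix `C̃` with columns
`C̃^{(k)} = (α s_k^n/n! − s_k^{n-1}/(n-1)!, ..., α s_k − 1, 1)ᵀ`. -/
noncomputable def tildeCMat (α : ℝ) (n : ℕ) (s : Fin (n + 1) → ℝ) :
    Matrix (Fin (n + 1)) (Fin (n + 1)) ℝ :=
  Matrix.of fun j k =>
    if (j : ℕ) < n then
      α * (s k ^ (n - (j : ℕ)) / (Nat.factorial (n - (j : ℕ))))
        - s k ^ (n - 1 - (j : ℕ)) / (Nat.factorial (n - 1 - (j : ℕ)))
    else 1

/-!
Differentiating `c_k e^{-α s_k} v(s_k)` in `s_k` gives `c_k e^{-α s_k} (v'(s_k) - α v(s_k))`, and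
`v'(s) = (s^{n-1}/(n-1)!, ..., 1, 0)` is `v(s)` shifted up by one row. So the Jacobian is `C̃` with its columns
scaled by `c_k e^{-α s_k}` and its rows by `-1` (and `-α` for the last one). In turn
`C̃ = A V` where `V` has columns `v(s_k)` and `A = α I - (shift)` (with last diagonal entry `1`) is
upper triangular with determinant `α^n`; up to the factorials, `V` is a Vandermonde matrix with
reversed rows, invertible because the `s_k` are distinct.
-/

open Matrix Function

theorem Fin.prod_ite_val_lt {M : Type*} [CommMonoid M] {n : ℕ} (a b : M) :
    ∏ j : Fin (n + 1), (if (j : ℕ) < n then a else b) = a ^ n * b := by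
  simp [Fin.prod_univ_castSucc]

theorem det_of_pow_rev_ne_zero {R : Type*} [CommRing R] [IsDomain R] {n : ℕ}
    {s : Fin (n + 1) → R} (hs : Injective s) :
    (of fun j k : Fin (n + 1) => s k ^ (n - (j : ℕ))).det ≠ 0 := by
  have hrev : (of fun j k : Fin (n + 1) => s k ^ (n - (j : ℕ))) =
      ((vandermonde s).submatrix id Fin.revPerm)ᵀ := by
    ext j k
    simp [vandermonde, Fin.val_rev]
  rw [hrev, det_transpose, det_permute']
  refine mul_ne_zero ?_ (det_vandermonde_ne_zero_iff.mpr hs)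
  rcases Int.units_eq_one_or (Equiv.Perm.sign (Fin.revPerm : Equiv.Perm (Fin (n + 1)))) with
    h | h <;> simp [h]

/-- The matrix with columns `v(s_k) = (s_k^n/n!, ..., s_k, 1)ᵀ`. -/
noncomputable def vMat (n : ℕ) (s : Fin (n + 1) → ℝ) : Matrix (Fin (n + 1)) (Fin (n + 1)) ℝ :=
  of fun j k => s k ^ (n - (j : ℕ)) / (n - (j : ℕ)).factorial

theorem vMat_eq_diagonal_mul (n : ℕ) (s : Fin (n + 1) → ℝ) :
    vMat n s = diagonal (fun j : Fin (n + 1) => ((n - (j : ℕ)).factorial : ℝ)⁻¹) *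
      of fun j k : Fin (n + 1) => s k ^ (n - (j : ℕ)) := by
  ext j k
  simp [vMat, div_eq_inv_mul]

theorem det_vMat_ne_zero {n : ℕ} {s : Fin (n + 1) → ℝ} (hs : Injective s) :
    (vMat n s).det ≠ 0 := by
  rw [vMat_eq_diagonal_mul, det_mul, det_diagonal]
  exact mul_ne_zero (Finset.prod_ne_zero_iff.mpr fun j _ => by positivity)
    (det_of_pow_rev_ne_zero hs)

noncomputable def tildeCFactor (α : ℝ) (n : ℕ) : Matrix (Fin (n + 1)) (Fin (n + 1)) ℝ :=
  of fun j j' =>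
    (if j' = j then (if (j : ℕ) < n then α else 1) else 0) - (if (j' : ℕ) = j + 1 then 1 else 0)

theorem det_tildeCFactor (α : ℝ) (n : ℕ) : (tildeCFactor α n).det = α ^ n := by
  have hupper : (tildeCFactor α n).IsUpperTriangular := by
    intro i j (hji : (j : ℕ) < i)
    have hne : j ≠ i := fun h => by omega
    simp [tildeCFactor, hne, show (j : ℕ) ≠ i + 1 by omega]
  rw [det_of_isUpperTriangular hupper]
  simpa [tildeCFactor] using Fin.prod_ite_val_lt (n := n) α 1

theorem tildeCMat_eq_tildeCFactor_mul_vMat (α : ℝ) (n : ℕ) (s : Fin (n + 1) → ℝ) :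
    tildeCMat α n s = tildeCFactor α n * vMat n s := by
  ext j k
  induction j using Fin.lastCases with
  | last =>
    have hno_succ : ∀ j' : Fin (n + 1), (j' : ℕ) ≠ n + 1 := fun j' => j'.isLt.ne
    simp [tildeCMat, tildeCFactor, vMat, mul_apply, hno_succ]
  | cast i =>
    have hsucc : ∀ j' : Fin (n + 1), ((j' : ℕ) = i + 1 ↔ j' = i.succ) := fun j' => by
      simp [Fin.ext_iff]
    simp only [tildeCMat, tildeCFactor, vMat, of_apply, mul_apply, Fin.val_castSucc, Fin.is_lt,
      ↓reduceIte, hsucc, sub_mul, ite_mul, zero_mul, one_mul, Finset.sum_sub_distrib,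
      Finset.sum_ite_eq', Finset.mem_univ, Fin.val_succ, sub_right_inj]
    rw [show n - 1 - (i : ℕ) = n - (i + 1) by omega]

theorem det_tildeCMat_ne_zero {α : ℝ} (hα : α ≠ 0) {n : ℕ} {s : Fin (n + 1) → ℝ}
    (hs : Injective s) : (tildeCMat α n s).det ≠ 0 := by
  rw [tildeCMat_eq_tildeCFactor_mul_vMat, det_mul, det_tildeCFactor]
  exact mul_ne_zero (pow_ne_zero n hα) (det_vMat_ne_zero hs)

theorem jacMat_eq_diagonal_mul_tildeCMat_mul_diagonal (α : ℝ) (n : ℕ) (c s : Fin (n + 1) → ℝ) :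
    jacMat α n c s =
      diagonal (fun j : Fin (n + 1) => if (j : ℕ) < n then -1 else -α) * tildeCMat α n s *
        diagonal (fun k => c k * Real.exp (-α * s k)) := by
  ext j k
  rw [mul_diagonal, diagonal_mul]
  by_cases hj : (j : ℕ) < n
  · simp only [jacMat, tildeCMat, of_apply, if_pos hj]
    ring
  · simp only [jacMat, tildeCMat, of_apply, hj, ↓reduceIte, show n - (j : ℕ) = 0 by omega,
      pow_zero, Nat.factorial_zero, Nat.cast_one, div_one]
    ring

theorem det_jacMat (α : ℝ) (n : ℕ) (c s : Fin (n + 1) → ℝ) :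
    (jacMat α n c s).det =
      (-1) ^ (n + 1) * α * (∏ k, c k * Real.exp (-α * s k)) * (tildeCMat α n s).det := by
  rw [jacMat_eq_diagonal_mul_tildeCMat_mul_diagonal, det_mul, det_mul, det_diagonal,
    det_diagonal, Fin.prod_ite_val_lt]
  ring

theorem jacMat_det_ne_zero_general (α : ℝ) (hα : 0 < α) (n : ℕ)
    (c s : Fin (n + 1) → ℝ) (hc : ∀ k, c k ≠ 0) (hanti : StrictAnti s) :
    (jacMat α n c s).det =
      (-1) ^ (n + 1) * α * (∏ k, c k * Real.exp (-α * s k)) * (tildeCMat α n s).det ∧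
    (jacMat α n c s).det ≠ 0 := by
  refine ⟨det_jacMat α n c s, ?_⟩
  rw [det_jacMat]
  have hprod : ∏ k, c k * Real.exp (-α * s k) ≠ 0 :=
    Finset.prod_ne_zero_iff.mpr fun k _ => mul_ne_zero (hc k) (Real.exp_ne_zero _)
  exact mul_ne_zero (mul_ne_zero (mul_ne_zero (by positivity) hα.ne') hprod)
    (det_tildeCMat_ne_zero hα.ne' hanti.injective)

/-- If all jump heights `c_k` are nonzero and `0 < s_n < ... < s_0 < T`, then the
Jacobian of `s ↦ γ(x,c,s)` is invertible: its determinant equals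
`(-1)^{n+1} α (∏_k c_k e^{-α s_k}) det C̃`, and it is nonzero. -/
theorem jacMat_det_ne_zero (α : ℝ) (hα : 0 < α) (n : ℕ) (T : ℝ) (hT : 0 < T)
    (c s : Fin (n + 1) → ℝ) (hc : ∀ k, c k ≠ 0) (hanti : StrictAnti s)
    (hs0 : ∀ k, 0 < s k) (hsT : ∀ k, s k < T) :
    (jacMat α n c s).det =
      (-1) ^ (n + 1) * α * (∏ k, c k * Real.exp (-α * s k)) * (tildeCMat α n s).det ∧
    (jacMat α n c s).det ≠ 0 :=
  jacMat_det_ne_zero_general α hα n c s hc hanti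
end

section
/- Row reduction of the matrix J with columns C̃^{(k)} = (α s_k^n/n! − s_k^{n-1}/(n-1)!, α s_k^{n-1}/(n-1)! − s_k^{n-2}/(n-2)!, ..., α s_k − 1, 1)^T, by replacing row i bottom-up with α^{-1}(r_i + r_{i-1})·(n+1-i)!, transforms J into the Vandermonde matrix with entries s_k^{n+1-j} in row j (last row all ones); hence det J ≠ 0 iff s_1, ..., s_{n+1} are pairwise distinct. -/
/-!
Each row `j < n` of `J` is `α/(n-j)!` times row `j` of the reversed Vandermonde matrix
`V = (s_k^{n-j})` minus `1/(n-1-j)!` times row `j+1`, and the last rows agree. So `J = M V` with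
`M` upper bidiagonal with nonzero diagonal, and `det J = det M · det V`, where `det V` is
`±` the Vandermonde determinant.
-/

open Matrix

namespace Matrix

theorem det_of_pow_rev_ne_zero_iff {R : Type*} [CommRing R] [IsDomain R] {n : ℕ}
    (v : Fin (n + 1) → R) :
    (of fun j k : Fin (n + 1) => v k ^ (n - (j : ℕ))).det ≠ 0 ↔ Function.Injective v := by
  have hrev : (of fun j k : Fin (n + 1) => v k ^ (n - (j : ℕ))) =
      ((vandermonde v).submatrix id Fin.revPerm)ᵀ := by
    ext j k
    simp only [of_apply, transpose_apply, submatrix_apply, id_eq, vandermonde_apply,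
      Fin.revPerm_apply, Fin.val_rev]
    congr 1
    omega
  have hsign : IsUnit ((Equiv.Perm.sign (Fin.revPerm : Equiv.Perm (Fin (n + 1))) : ℤ) : R) :=
    (Units.isUnit _).map (Int.castRingHom R)
  rw [hrev, det_transpose, det_permute', ne_eq, hsign.mul_right_eq_zero, ← ne_eq,
    det_vandermonde_ne_zero_iff]

end Matrix

theorem Fin.sum_univ_ite_val_eq {M : Type*} [AddCommMonoid M] {n : ℕ} (m : ℕ) (f : Fin n → M) :
    ∑ i : Fin n, (if (i : ℕ) = m then f i else 0) = if h : m < n then f ⟨m, h⟩ else 0 := by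
  split_ifs with h
  · rw [Finset.sum_eq_single ⟨m, h⟩ (fun i _ hi => if_neg fun e => hi (Fin.ext e)) (by simp),
      if_pos rfl]
  · exact Finset.sum_eq_zero fun i _ => if_neg fun (e : (i : ℕ) = m) => h (e ▸ i.isLt)

section RowReduction

variable (α : ℝ) (n : ℕ)

noncomputable def tildeCRowOp : Matrix (Fin (n + 1)) (Fin (n + 1)) ℝ :=
  of fun j i =>
    if (j : ℕ) < n then
      (if (i : ℕ) = j then α / (n - (j : ℕ)).factorial else 0)
        - (if (i : ℕ) = j + 1 then ((n - 1 - (j : ℕ)).factorial : ℝ)⁻¹ else 0)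
    else if (i : ℕ) = j then 1 else 0

theorem tildeCRowOp_isUpperTriangular : (tildeCRowOp α n).IsUpperTriangular := by
  intro j i hij
  have hi : (i : ℕ) < j := hij
  simp only [tildeCRowOp, of_apply]
  split_ifs <;> first | omega | simp

theorem det_tildeCRowOp_ne_zero {α : ℝ} (hα : α ≠ 0) : (tildeCRowOp α n).det ≠ 0 := by
  rw [det_of_isUpperTriangular (tildeCRowOp_isUpperTriangular α n)]
  refine Finset.prod_ne_zero_iff.2 fun j _ => ?_
  simp only [tildeCRowOp, of_apply, if_true, Nat.ne_add_one, if_false, sub_zero]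
  split_ifs
  · positivity
  · exact one_ne_zero

theorem tildeCMat_eq_tildeCRowOp_mul (s : Fin (n + 1) → ℝ) :
    tildeCMat α n s = tildeCRowOp α n * of fun j k : Fin (n + 1) => s k ^ (n - (j : ℕ)) := by
  ext j k
  simp only [tildeCMat, tildeCRowOp, mul_apply, of_apply]
  split_ifs with hj
  · have hj' : (j : ℕ) + 1 < n + 1 := by omega
    have hexp : n - ((j : ℕ) + 1) = n - 1 - j := by omega
    simp only [sub_mul, ite_mul, zero_mul, Finset.sum_sub_distrib, Fin.sum_univ_ite_val_eq,
      j.isLt, hj', dif_pos, hexp]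
    ring
  · simp only [ite_mul, one_mul, zero_mul, Fin.sum_univ_ite_val_eq, j.isLt, dif_pos,
      Nat.sub_eq_zero_of_le (not_lt.1 hj), pow_zero]

end RowReduction

/-- Row reduction transforms `J = C̃` into the Vandermonde-type matrix with entries
`s_k^{n-j}` in row `j` (last row all ones): the determinant of `J` is a nonzero
multiple (depending only on `α` and `n`) of the Vandermonde determinant; hence
`det J ≠ 0` iff the `s_k` are pairwise distinct. -/
theorem tildeCMat_det_vandermonde (α : ℝ) (hα : 0 < α) (n : ℕ)
    (s : Fin (n + 1) → ℝ) :
    ∃ κ : ℝ, κ ≠ 0 ∧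
      (tildeCMat α n s).det =
        κ * (Matrix.of fun j k : Fin (n + 1) => s k ^ (n - (j : ℕ))).det ∧
      ((tildeCMat α n s).det ≠ 0 ↔ Function.Injective s) := by
  have hκ := det_tildeCRowOp_ne_zero n hα.ne'
  have hdet : (tildeCMat α n s).det = (tildeCRowOp α n).det *
      (of fun j k : Fin (n + 1) => s k ^ (n - (j : ℕ))).det := by
    rw [tildeCMat_eq_tildeCRowOp_mul, det_mul]
  refine ⟨_, hκ, hdet, ?_⟩
  rw [hdet, mul_ne_zero_iff_left hκ, det_of_pow_rev_ne_zero_iff]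
end

section
/- For the Lyapunov function V(x) = 1 + Σ_{i=1}^L Σ_{k=0}^{n_i} (b(k+1)/α_i^k)|x^{(i,k)}| with b strictly increasing, the drift part A(x) = Σ_i ( Σ_{k=0}^{n_i−1} (b(k+1)/α_i^k)(x^{(i,k+1)} − α_i x^{(i,k)}) sgn(x^{(i,k)}) − (b(n_i+1)/α_i^{n_i−1})|x^{(i,n_i)}| ) satisfies A(x) ≤ −α b(1) Σ_i |x^{(i,0)}| − r Σ_i Σ_{k=1}^{n_i} (b(k+1)/α_i^k)|x^{(i,k)}|, where α = min_i α_i, b_* = min_{0≤k≤n}(b(k+1)−b(k)), n = max_i n_i and r = α b_*/b(n+1). -/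
/-!
Since `z · sgn y ≤ |z|` and `y · sgn y = |y|`, each summand of the drift part is bounded by the
same expression in the absolute values `|x^{(i,k)}|`. In the absolute values the sum over `k`
telescopes (summation by parts): what remains is `-α_i b(1) |x^{(i,0)}|` minus the terms
`α_i (b(k+1) - b(k)) / α_i^k · |x^{(i,k)}|`, and these dominate the required ones because
`r b(k+1) = α b_* · b(k+1)/b(n+1) ≤ α_i b_* ≤ α_i (b(k+1) - b(k))`.
-/

open Finset

namespace Real

lemma mul_sign_self (y : ℝ) : y * sign y = |y| := by
  rcases lt_trichotomy y 0 with h | rfl | h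
  · rw [sign_of_neg h, abs_of_neg h, mul_neg_one]
  · simp
  · rw [sign_of_pos h, abs_of_pos h, mul_one]

lemma mul_sign_le_abs (z y : ℝ) : z * sign y ≤ |z| := by
  rcases sign_apply_eq y with h | h | h <;> rw [h]
  · exact (mul_neg_one z).trans_le (neg_le_abs z)
  · simp
  · exact (mul_one z).trans_le (le_abs_self z)

lemma sub_mul_mul_sign_le (a x y : ℝ) : (y - a * x) * sign x ≤ |y| - a * |x| := by
  rw [sub_mul, mul_assoc, mul_sign_self]
  linarith [mul_sign_le_abs y x]

end Real

lemma sum_range_div_pow_mul_sub_eq {α : ℝ} (hα : α ≠ 0) (b u : ℕ → ℝ) (m : ℕ) :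
    ∑ k ∈ range m, b (k + 1) / α ^ k * (u (k + 1) - α * u k) - α * b (m + 1) / α ^ m * u m =
      -(α * b 1) * u 0 - ∑ k ∈ Icc 1 m, α * (b (k + 1) - b k) / α ^ k * u k := by
  induction m with
  | zero => simp
  | succ m ih =>
    rw [sum_range_succ, sum_Icc_succ_top (Nat.le_add_left 1 m), ← sub_sub, ← ih,
      pow_succ]
    field_simp
    ring

lemma cascade_drift_le {α : ℝ} (hα : 0 < α) {b : ℕ → ℝ} {m : ℕ} (hb : ∀ k < m, 0 ≤ b (k + 1))
    (x : ℕ → ℝ) :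
    ∑ k ∈ range m, b (k + 1) / α ^ k * (x (k + 1) - α * x k) * Real.sign (x k)
        - α * b (m + 1) / α ^ m * |x m| ≤
      -(α * b 1) * |x 0| - ∑ k ∈ Icc 1 m, α * (b (k + 1) - b k) / α ^ k * |x k| := by
  refine le_of_le_of_eq ?_ (sum_range_div_pow_mul_sub_eq hα.ne' b (fun k ↦ |x k|) m)
  refine sub_le_sub_right (sum_le_sum fun k hk ↦ ?_) _
  have := hb k (mem_range.1 hk)
  rw [mul_assoc]
  gcongr
  exact Real.sub_mul_mul_sign_le α (x k) (x (k + 1))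

lemma mul_div_mul_le_mul {a a' s d c B : ℝ} (ha : a ≤ a') (ha' : 0 ≤ a') (hs : 0 ≤ s)
    (hsd : s ≤ d) (hc : 0 ≤ c) (hcB : c ≤ B) : a * s / B * c ≤ a' * d := by
  have hB : 0 ≤ B := hc.trans hcB
  have ht : c / B ≤ 1 := div_le_one_of_le₀ hcB hB
  calc a * s / B * c = a * s * (c / B) := by ring
    _ ≤ a' * s * (c / B) := by gcongr
    _ ≤ a' * s := mul_le_of_le_one_right (by positivity) ht
    _ ≤ a' * d := by gcongr

theorem cascade_drift_part_bound_general
    {L : ℕ} (n : Fin L → ℕ) (α : Fin L → ℝ) (hα : ∀ i, 0 < α i)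
    (nmax : ℕ) (hnmax : ∀ i, n i ≤ nmax)
    (b : ℕ → ℝ) (hbpos : ∀ k ≤ nmax + 1, 0 < b k)
    (hbmono : ∀ k ≤ nmax, b k < b (k + 1))
    (αmin : ℝ) (hαmin : ∀ i, αmin ≤ α i)
    (bstar : ℝ) (hbstar : ∀ k ≤ nmax, bstar ≤ b (k + 1) - b k)
    (hbstarmem : ∃ k ≤ nmax, b (k + 1) - b k = bstar)
    (r : ℝ) (hr : r = αmin * bstar / b (nmax + 1))
    (x : Fin L → ℕ → ℝ) :
    (∑ i, ((∑ k ∈ Finset.range (n i),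
        b (k + 1) / (α i) ^ k * (x i (k + 1) - α i * x i k) * Real.sign (x i k))
      - α i * b (n i + 1) / (α i) ^ (n i) * |x i (n i)|)) ≤
    -(αmin * b 1) * (∑ i, |x i 0|)
      - r * ∑ i, ∑ k ∈ Finset.Icc 1 (n i), b (k + 1) / (α i) ^ k * |x i k| := by
  obtain ⟨k₀, hk₀, rfl⟩ := hbstarmem
  have hbstar_nonneg : 0 ≤ b (k₀ + 1) - b k₀ := sub_nonneg.2 (hbmono k₀ hk₀).le
  have hb_monoOn : MonotoneOn b (Set.Iic (nmax + 1)) :=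
    (strictMonoOn_Iic_of_lt_succ fun m hm ↦ hbmono m (Nat.lt_succ_iff.1 hm)).monotoneOn
  rw [mul_sum, mul_sum, ← sum_sub_distrib]
  refine sum_le_sum fun i _ ↦ ?_
  have hni := hnmax i
  refine (cascade_drift_le (hα i) (fun k hk ↦ (hbpos _ (by omega)).le) (x i)).trans ?_
  gcongr ?_ - ?_
  · have hb₁ := hbpos 1 (by omega)
    gcongr
    exact hαmin i
  · rw [mul_sum]
    refine sum_le_sum fun k hk ↦ ?_
    have hkn : k ≤ nmax := (mem_Icc.1 hk).2.trans hni
    have hrate : r * b (k + 1) ≤ α i * (b (k + 1) - b k) := hr ▸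
      mul_div_mul_le_mul (hαmin i) (hα i).le hbstar_nonneg (hbstar k hkn)
        (hbpos _ (by omega)).le
        (hb_monoOn (Set.mem_Iic.2 (by omega)) (Set.mem_Iic.2 le_rfl) (by omega))
    calc r * (b (k + 1) / α i ^ k * |x i k|) = r * b (k + 1) * (|x i k| / α i ^ k) := by ring
      _ ≤ α i * (b (k + 1) - b k) * (|x i k| / α i ^ k) :=
          mul_le_mul_of_nonneg_right hrate (div_nonneg (abs_nonneg _) (pow_pos (hα i) k).le)
      _ = α i * (b (k + 1) - b k) / α i ^ k * |x i k| := by ring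

/-- The drift part of `𝓛V` for the Lyapunov function
`V(x) = 1 + Σ_i Σ_k (b(k+1)/α_i^k)|x^{(i,k)}|` satisfies
`A(x) ≤ −α b(1) Σ_i |x^{(i,0)}| − r Σ_i Σ_{k=1}^{n_i} (b(k+1)/α_i^k)|x^{(i,k)}|`,
where `α = min_i α_i`, `n = max_i n_i`, `b_* = min_{0≤k≤n}(b(k+1)−b(k))` and
`r = α b_*/b(n+1)`. -/
theorem cascade_drift_part_bound
    {L : ℕ} (hL : 0 < L) (n : Fin L → ℕ) (α : Fin L → ℝ) (hα : ∀ i, 0 < α i)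
    (nmax : ℕ) (hnmax : ∀ i, n i ≤ nmax) (hnmem : ∃ i, n i = nmax)
    (b : ℕ → ℝ) (hbpos : ∀ k ≤ nmax + 1, 0 < b k)
    (hbmono : ∀ k ≤ nmax, b k < b (k + 1))
    (αmin : ℝ) (hαmin : ∀ i, αmin ≤ α i) (hαmem : ∃ i, α i = αmin)
    (bstar : ℝ) (hbstar : ∀ k ≤ nmax, bstar ≤ b (k + 1) - b k)
    (hbstarmem : ∃ k ≤ nmax, b (k + 1) - b k = bstar)
    (r : ℝ) (hr : r = αmin * bstar / b (nmax + 1))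
    (x : Fin L → ℕ → ℝ) :
    (∑ i, ((∑ k ∈ Finset.range (n i),
        b (k + 1) / (α i) ^ k * (x i (k + 1) - α i * x i k) * Real.sign (x i k))
      - α i * b (n i + 1) / (α i) ^ (n i) * |x i (n i)|)) ≤
    -(αmin * b 1) * (∑ i, |x i 0|)
      - r * ∑ i, ∑ k ∈ Finset.Icc 1 (n i), b (k + 1) / (α i) ^ k * |x i k| :=
  cascade_drift_part_bound_general n α hα nmax hnmax b hbpos hbmono αmin hαmin bstar hbstar
    hbstarmem r hr x
end
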